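/- Let $U, W: [0,1]^r \to [0,1]$ be bounded measurable and let $F$ be a linear $r$-uniform hypergraph (any two distinct edges share at most one vertex). Then $|t(F,U)-t(F,W)| \le |E(F)| \cdot \|U-W\|_{\square,1}$ (hypergraph counting lemma for linear test hypergraphs in $1$-cut norm), where $t(F,W)=\int_{[0,1]^{V(F)}}\prod_{e=\{v_1,\ldots,v_r\}\in E(F)} W(x_{v_1},\ldots,x_{v_r})\prod_v dx_v$. -/

import Mathlib

/-!
Swap the copies of `U` for copies of `W` one edge at a time. A single swap at the edge `e`
changes the density by the integral of `(U - W)(x_e)` against a product of `[0,1]`-valued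
factors, one per remaining edge. Conditionally on the coordinates outside `e`, linearity lets
each remaining edge see at most one coordinate of `e`, so that product is a constant in `[0,1]`
times a product of one-variable functions of the coordinates of `e`: a test function of the
`1`-cut norm. Summing over the `|E(F)|` swaps gives the bound.
-/

open MeasureTheory

noncomputable section

def I01 : Set ℝ := Set.Icc 0 1

def piI (n : ℕ) : Set (Fin n → ℝ) := Set.univ.pi fun _ => I01

/-- The `1`-cut norm of an `r`-variable kernel. -/
def cutNorm1 (r : ℕ) (U : (Fin r → ℝ) → ℝ) : ℝ :=
  sSup { c : ℝ | ∃ f : Fin r → ℝ → ℝ, (∀ i, Measurable (f i)) ∧ (∀ i x, f i x ∈ I01) ∧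
    c = |∫ x in piI r, U x * ∏ i, f i (x i)| }

open Finset Function Set

instance : IsProbabilityMeasure (volume.restrict I01) := ⟨by simp [I01]⟩

abbrev cubeMeasure (ι : Type*) [Fintype ι] : Measure (ι → ℝ) :=
  .pi fun _ => volume.restrict I01

theorem volume_restrict_piI (n : ℕ) : volume.restrict (piI n) = cubeMeasure (Fin n) :=
  Measure.restrict_pi_pi _ _

theorem abs_mul_le_of_mem_I01 {a b C : ℝ} (ha : |a| ≤ C) (hb : b ∈ I01) : |a * b| ≤ C := by
  rw [abs_mul, abs_of_nonneg hb.1]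
  exact (mul_le_of_le_one_right (abs_nonneg a) hb.2).trans ha

theorem abs_integral_le_of_abs_le {α : Type*} [MeasurableSpace α] {μ : Measure α}
    [IsProbabilityMeasure μ] {g : α → ℝ} {C : ℝ} (h : ∀ x, |g x| ≤ C) : |∫ x, g x ∂μ| ≤ C := by
  simpa using norm_integral_le_of_norm_le_const (μ := μ) (f := g)
    (ae_of_all _ fun x => by simpa [Real.norm_eq_abs] using h x)

theorem abs_integral_le_cutNorm1 {r : ℕ} {D : (Fin r → ℝ) → ℝ} {C : ℝ} (hD : ∀ x, |D x| ≤ C)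
    {f : Fin r → ℝ → ℝ} (hfm : ∀ i, Measurable (f i)) (hf : ∀ i x, f i x ∈ I01) :
    |∫ x in piI r, D x * ∏ i, f i (x i)| ≤ cutNorm1 r D := by
  refine le_csSup ⟨C, ?_⟩ ⟨f, hfm, hf, rfl⟩
  rintro _ ⟨g, -, hg, rfl⟩
  rw [volume_restrict_piI]
  exact abs_integral_le_of_abs_le fun x =>
    abs_mul_le_of_mem_I01 (hD x) (unitInterval.prod_mem fun i _ => hg i (x i))

theorem abs_integral_comp_equiv_le_cutNorm1 {r : ℕ} {κ : Type*} [Fintype κ] (σ : Fin r ≃ κ)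
    {D : (Fin r → ℝ) → ℝ} {C : ℝ} (hD : ∀ x, |D x| ≤ C)
    {g : κ → ℝ → ℝ} (hgm : ∀ i, Measurable (g i)) (hg : ∀ i x, g i x ∈ I01) :
    |∫ y, D (y ∘ σ) * ∏ i, g i (y i) ∂cubeMeasure κ| ≤ cutNorm1 r D := by
  have hσ := measurePreserving_piCongrLeft (fun _ : κ => volume.restrict I01) σ
  have hcomp : ∀ x : Fin r → ℝ, Equiv.piCongrLeft (fun _ : κ => ℝ) σ x ∘ σ = x := fun x =>
    funext (Equiv.piCongrLeft_apply_apply (fun _ : κ => ℝ) σ x)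
  rw [← hσ.integral_comp']
  simp only [MeasurableEquiv.coe_piCongrLeft, ← σ.prod_comp, hcomp,
    Equiv.piCongrLeft_apply_apply]
  have := abs_integral_le_cutNorm1 hD (fun k => hgm (σ k)) (fun k => hg (σ k))
  rwa [volume_restrict_piI] at this

theorem abs_integral_prod_le {α β : Type*} [MeasurableSpace α] [MeasurableSpace β]
    {μ : Measure α} {ν : Measure β} [SFinite μ] [IsProbabilityMeasure ν] {G : α × β → ℝ}
    (hG : Integrable G (μ.prod ν)) {C : ℝ} (h : ∀ b, |∫ a, G (a, b) ∂μ| ≤ C) :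
    |∫ q, G q ∂μ.prod ν| ≤ C := by
  rw [integral_prod_symm _ hG]
  exact abs_integral_le_of_abs_le h

theorem prod_eq_mul_prod_update {J κ α M : Type*} [Fintype κ] [DecidableEq κ] [CommMonoid M]
    (s : Finset J) (G : J → (κ → α) → M) (hit : J → Option κ)
    (hG : ∀ j ∈ s, ∀ y y' : κ → α, (∀ i ∈ hit j, y i = y' i) → G j y = G j y')
    (y₀ y : κ → α) :
    ∏ j ∈ s, G j y = (∏ j ∈ s with hit j = none, G j y₀) *
      ∏ i, ∏ j ∈ s with hit j = some i, G j (update y₀ i (y i)) := by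
  rw [← Finset.prod_fiberwise s hit, Fintype.prod_option]
  congr 1
  · refine prod_congr rfl fun j hj => hG j (mem_filter.1 hj).1 _ _ ?_
    simp [(mem_filter.1 hj).2]
  · refine prod_congr rfl fun i _ => prod_congr rfl fun j hj => hG j (mem_filter.1 hj).1 _ _ ?_
    simp [(mem_filter.1 hj).2]

theorem exists_coord_piEquivPiSubtypeProd_symm_comp_eq {ι κ β : Type*} {p : ι → Prop}
    [DecidablePred p] {τ : κ → ι} (hτ : ∀ k k', p (τ k) → p (τ k') → τ k = τ k') :
    ∃ o : Option (Subtype p), ∀ (y y' : Subtype p → β) (z : {i // ¬p i} → β),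
      (∀ i ∈ o, y i = y' i) → (Equiv.piEquivPiSubtypeProd p fun _ => β).symm (y, z) ∘ τ =
        (Equiv.piEquivPiSubtypeProd p fun _ => β).symm (y', z) ∘ τ := by
  by_cases hex : ∃ k, p (τ k)
  · obtain ⟨k₀, hk₀⟩ := hex
    refine ⟨some ⟨τ k₀, hk₀⟩, fun y y' z hyy' => funext fun k => ?_⟩
    by_cases hk : p (τ k)
    · have hkk₀ : (⟨τ k, hk⟩ : Subtype p) = ⟨τ k₀, hk₀⟩ := Subtype.ext (hτ k k₀ hk hk₀)
      simpa [hk, hkk₀] using hyy' _ rfl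
    · simp [hk]
  · exact ⟨none, fun y y' z _ => funext fun k => by simp [not_exists.1 hex k]⟩

theorem abs_integral_mul_prod_le_cutNorm1 {r : ℕ} {ι J : Type*} [Fintype ι]
    {D : (Fin r → ℝ) → ℝ} {C : ℝ} (hDm : Measurable D) (hD : ∀ x, |D x| ≤ C)
    {σ : Fin r → ι} (hσ : Injective σ) (s : Finset J) (τ : J → Fin r → ι)
    (hτ : ∀ j ∈ s, ∀ k k', τ j k ∈ range σ → τ j k' ∈ range σ → τ j k = τ j k')
    {T : J → (Fin r → ℝ) → ℝ} (hTm : ∀ j, Measurable (T j)) (hT : ∀ j x, T j x ∈ I01) :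
    |∫ x, D (x ∘ σ) * ∏ j ∈ s, T j (x ∘ τ j) ∂cubeMeasure ι| ≤ cutNorm1 r D := by
  classical
  -- not `(· ∈ range σ)`, for which `Fintype (Subtype p)` would be found as `Set.fintypeRange`
  let p : ι → Prop := fun i => ∃ k, σ k = i
  let e := MeasurableEquiv.piEquivPiSubtypeProd (fun _ : ι => ℝ) p
  have he := measurePreserving_piEquivPiSubtypeProd (fun _ : ι => volume.restrict I01) p
  let F : (ι → ℝ) → ℝ := fun x => D (x ∘ σ) * ∏ j ∈ s, T j (x ∘ τ j)
  have hFm : Measurable F := by fun_prop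
  have hF : ∀ x, |F x| ≤ C := fun x =>
    abs_mul_le_of_mem_I01 (hD _) (unitInterval.prod_mem fun j _ => hT j _)
  rw [← he.symm.integral_comp' F]
  refine abs_integral_prod_le
    (.of_bound (hFm.comp e.symm.measurable).aestronglyMeasurable C (ae_of_all _ fun q => hF _))
    fun z => ?_
  choose! hit hhit using fun j (hj : j ∈ s) =>
    exists_coord_piEquivPiSubtypeProd_symm_comp_eq (β := ℝ) (p := p) (hτ j hj)
  let G : J → (Subtype p → ℝ) → ℝ := fun j y => T j (e.symm (y, z) ∘ τ j)
  have hG : ∀ j ∈ s, ∀ y y' : Subtype p → ℝ, (∀ i ∈ hit j, y i = y' i) → G j y = G j y' :=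
    fun j hj y y' hyy' => congrArg (T j) (hhit j hj y y' z hyy')
  let c := ∏ j ∈ s with hit j = none, G j 0
  let f : Subtype p → ℝ → ℝ := fun i t => ∏ j ∈ s with hit j = some i, G j (update 0 i t)
  have hfm : ∀ i, Measurable (f i) := fun i => by fun_prop
  let σ' : Fin r ≃ Subtype p := Equiv.ofInjective σ hσ
  have hsplit : ∀ y, F (e.symm (y, z)) = (D (y ∘ σ') * ∏ i, f i (y i)) * c := fun y => by
    have hyσ : e.symm (y, z) ∘ σ = y ∘ σ' := funext fun k => dif_pos (mem_range_self k)
    calc F (e.symm (y, z)) = D (y ∘ σ') * ∏ j ∈ s, G j y := by rw [← hyσ]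
      _ = _ := by rw [prod_eq_mul_prod_update s G hit hG 0 y]; ring
  simp only [comp_apply, hsplit, integral_mul_const]
  exact abs_mul_le_of_mem_I01 (abs_integral_comp_equiv_le_cutNorm1 σ' hD hfm
    fun i t => unitInterval.prod_mem fun j _ => hT j _) (unitInterval.prod_mem fun j _ => hT j _)

theorem prod_ite_insert_sub_prod_ite {J X R : Type*} [DecidableEq J] [CommRing R]
    {s t : Finset J} {a : J} (ha : a ∈ s) (hat : a ∉ t) (U W : X → R) (v : J → X) :
    ∏ j ∈ s, (if j ∈ insert a t then U else W) (v j) - ∏ j ∈ s, (if j ∈ t then U else W) (v j)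
      = (U (v a) - W (v a)) * ∏ j ∈ s.erase a, (if j ∈ t then U else W) (v j) := by
  have hrest : ∀ j ∈ s.erase a,
      (if j ∈ insert a t then U else W) (v j) = (if j ∈ t then U else W) (v j) := fun j hj => by
    simp [ne_of_mem_erase hj]
  rw [← mul_prod_erase s _ ha, ← mul_prod_erase s _ ha, if_pos (mem_insert_self a t), if_neg hat,
    prod_congr rfl hrest]
  ring

theorem abs_sub_le_card_mul_of_abs_insert_sub_le {J : Type*} [DecidableEq J] (Φ : Finset J → ℝ)
    {s : Finset J} {C : ℝ} (h : ∀ t ⊆ s, ∀ a ∈ s, a ∉ t → |Φ (insert a t) - Φ t| ≤ C) :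
    |Φ s - Φ ∅| ≤ #s * C := by
  suffices ∀ t ⊆ s, |Φ t - Φ ∅| ≤ #t * C from this s subset_rfl
  intro t
  induction t using Finset.induction_on with
  | empty => simp
  | insert a t hat ih =>
    intro hts
    have hts' := (Finset.subset_insert a t).trans hts
    calc |Φ (insert a t) - Φ ∅| ≤ |Φ (insert a t) - Φ t| + |Φ t - Φ ∅| := abs_sub_le _ _ _
      _ ≤ C + #t * C := add_le_add (h t hts' a (hts (mem_insert_self a t)) hat) (ih hts')
      _ = #(insert a t) * C := by rw [card_insert_of_notMem hat]; push_cast; ring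

theorem abs_integral_prod_sub_integral_prod_le {r : ℕ} {ι J : Type*} [Fintype ι]
    (s : Finset J) (τ : J → Fin r → ι) (hτ : ∀ j ∈ s, Injective (τ j))
    (hlin : ∀ j ∈ s, ∀ j' ∈ s, j ≠ j' → ∀ k k',
      τ j' k ∈ range (τ j) → τ j' k' ∈ range (τ j) → τ j' k = τ j' k')
    {U W : (Fin r → ℝ) → ℝ} (hUm : Measurable U) (hWm : Measurable W)
    (hU : ∀ x, U x ∈ I01) (hW : ∀ x, W x ∈ I01) :
    |∫ x, ∏ j ∈ s, U (x ∘ τ j) ∂cubeMeasure ι - ∫ x, ∏ j ∈ s, W (x ∘ τ j) ∂cubeMeasure ι|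
      ≤ #s * cutNorm1 r (U - W) := by
  classical
  let T : Finset J → J → (Fin r → ℝ) → ℝ := fun t j => if j ∈ t then U else W
  have hTm : ∀ t j, Measurable (T t j) := fun t j => by
    dsimp only [T]; split_ifs <;> assumption
  have hT : ∀ t j x, T t j x ∈ I01 := fun t j x => by
    dsimp only [T]; split_ifs; exacts [hU x, hW x]
  have hint : ∀ t, Integrable (fun x => ∏ j ∈ s, T t j (x ∘ τ j)) (cubeMeasure ι) := fun t =>
    .of_bound (measurable_prod s fun j _ => (hTm t j).comp (by fun_prop)).aestronglyMeasurable 1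
      (ae_of_all _ fun x => by
        have h := unitInterval.prod_mem fun j (_ : j ∈ s) => hT t j (x ∘ τ j)
        exact (abs_of_nonneg h.1).trans_le h.2)
  let Φ : Finset J → ℝ := fun t => ∫ x, ∏ j ∈ s, T t j (x ∘ τ j) ∂cubeMeasure ι
  have hΦs : Φ s = ∫ x, ∏ j ∈ s, U (x ∘ τ j) ∂cubeMeasure ι :=
    integral_congr_ae (ae_of_all _ fun x => prod_congr rfl fun j hj => by simp [T, hj])
  have hΦ0 : Φ ∅ = ∫ x, ∏ j ∈ s, W (x ∘ τ j) ∂cubeMeasure ι := by simp [Φ, T]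
  rw [← hΦs, ← hΦ0]
  refine abs_sub_le_card_mul_of_abs_insert_sub_le Φ fun t _ a ha hat => ?_
  rw [← integral_sub (hint _) (hint _)]
  simp only [T, prod_ite_insert_sub_prod_ite ha hat]
  refine abs_integral_mul_prod_le_cutNorm1 (hUm.sub hWm)
    (fun x => abs_sub_le_of_nonneg_of_le (hU x).1 (hU x).2 (hW x).1 (hW x).2) (hτ a ha)
    (s.erase a) τ
    (fun j hj => hlin a ha j (mem_of_mem_erase hj) (ne_of_mem_erase hj).symm) (hTm t) (hT t)

theorem stmt15 (r M : ℕ) (EF : Finset (Finset (Fin M)))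
    (hunif : ∀ e ∈ EF, e.card = r)
    (hlin : ∀ e ∈ EF, ∀ f ∈ EF, e ≠ f → (e ∩ f).card ≤ 1)
    (U W : (Fin r → ℝ) → ℝ)
    (hUmeas : Measurable U) (hWmeas : Measurable W)
    (hUrange : ∀ x, U x ∈ I01) (hWrange : ∀ x, W x ∈ I01) :
    |(∫ x : Fin M → ℝ in piI M, ∏ e ∈ EF.attach,
        U fun i => x ((e.1.orderIsoOfFin (hunif e.1 e.2)) i))
      - ∫ x : Fin M → ℝ in piI M, ∏ e ∈ EF.attach,
        W fun i => x ((e.1.orderIsoOfFin (hunif e.1 e.2)) i)|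
      ≤ EF.card * cutNorm1 r (fun x => U x - W x) := by
  let τ : EF → Fin r → Fin M := fun e k => e.1.orderIsoOfFin (hunif e.1 e.2) k
  have hrange : ∀ e, range (τ e) = e.1 := fun e => by simp [τ]
  rw [volume_restrict_piI, ← card_attach]
  refine abs_integral_prod_sub_integral_prod_le EF.attach τ
    (fun e _ => Subtype.val_injective.comp (OrderIso.injective _)) ?_ hUmeas hWmeas hUrange hWrange
  intro e _ f _ hef k k' hk hk'
  rw [hrange] at hk hk'
  refine card_le_one.1 (hlin f.1 f.2 e.1 e.2 fun h => hef (Subtype.ext h).symm) _ ?_ _ ?_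
  · exact mem_inter.2 ⟨(f.1.orderIsoOfFin _ k).2, hk⟩
  · exact mem_inter.2 ⟨(f.1.orderIsoOfFin _ k').2, hk'⟩
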